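/- Let μ = m₁ϖ₁ + m₂ϖ₂ be a K-type of the split real group G₂₍₂₎, i.e. (m₁,m₂) ∈ ℕ² with m₁+m₂ even. Then ‖μ‖_spin = ‖μ‖_lambda if and only if (m₁,m₂) has one of the following forms: (a+3b+2, a+b) for some a,b ∈ ℕ with a+b ≥ 1; or (2a+3b+3, b−1) for some a ∈ ℕ and b ≥ 1; or (a−1, a+2b+1) for some a ≥ 1 and b ∈ ℕ. -/

import Mathlib

/-!
Both norms are computed in closed form. A positive system of `G₂` containing `Δ⁺(k)` is
determined by the chamber of a regular vector, and there are exactly three of them,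
`Δ⁺(k) ∪ Pᵢ`. The group `W(k)` is generated by the reflections in the orthogonal roots `γ₁, γ₂`,
so `{ξ}` is the vector with invariants `|⟪ξ, γ₁⟫|`, `|⟪ξ, γ₂⟫|`, `⟪ξ, ν⟫` (`ν = (1,1,1)`), and the
spin norm is the square root of a minimum of three explicit quadratic expressions in `m₁, m₂`.
Since `μ + 2ρ_c` is strictly `Δ⁺(k)`-dominant, the admissible `Δ′` are among the same three
systems; in each region of `(m₁, m₂)` the nearest point `λ_a` is certified by the variational
inequality, with at most one active wall. Comparing the two closed forms region by region, using
`m₁ ≡ m₂ (mod 2)`, leaves exactly the three families.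
-/

noncomputable section

open scoped RealInnerProductSpace

namespace Stmt2

abbrev E3 : Type := EuclideanSpace ℝ (Fin 3)

def e (i : Fin 3) : E3 := EuclideanSpace.single i 1

/-- Membership in the hyperplane `V = {x : x₁+x₂+x₃ = 0}`. -/
def InV (v : E3) : Prop := v 0 + v 1 + v 2 = 0

/-- The root system of type `G₂` in `V`: the 12 vectors `±(eᵢ−eⱼ)` (i<j) and
`±(2eᵢ−eⱼ−e_k)` ({i,j,k} = {1,2,3}), the latter written as `±(3eᵢ − (e₁+e₂+e₃))`. -/
def ΔG2 : Set E3 :=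
  {v | (∃ i j, i ≠ j ∧ v = e i - e j) ∨
       (∃ i, v = (3 : ℝ) • e i - (e 0 + e 1 + e 2) ∨
             v = (e 0 + e 1 + e 2) - (3 : ℝ) • e i)}

/-- `P` is a positive system of the finite root system `S` (inside `V`). -/
def IsPosSystem (S P : Set E3) : Prop :=
  ∃ v : E3, InV v ∧ (∀ α ∈ S, ⟪α, v⟫ ≠ 0) ∧ P = {α | α ∈ S ∧ 0 < ⟪α, v⟫}

/-- Half sum of the (finitely many) elements of `S`. -/
def halfSum (S : Set E3) : E3 := (2 : ℝ)⁻¹ • ∑ᶠ α ∈ S, α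

/-- `w` is the reflection in a root `α ∈ Δ`. -/
def IsReflIn (Δ : Set E3) (w : E3 ≃ₗᵢ[ℝ] E3) : Prop :=
  ∃ α ∈ Δ, ∀ x : E3, w x = x - (2 * ⟪x, α⟫ / ⟪α, α⟫) • α

/-- The group generated by the reflections in the elements of `Δ`. -/
def WeylGroup (Δ : Set E3) : Subgroup (E3 ≃ₗᵢ[ℝ] E3) :=
  Subgroup.closure {w | IsReflIn Δ w}

/-- `ξ` is dominant with respect to the positive roots `Δplus`. -/
def IsDom (Δplus : Set E3) (ξ : E3) : Prop := ∀ γ ∈ Δplus, 0 ≤ ⟪ξ, γ⟫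

/-- `γ₁ = e₁ − e₂`. -/
def γ1 : E3 := e 0 - e 1

/-- `γ₂ = −e₁ − e₂ + 2e₃`. -/
def γ2 : E3 := (3 : ℝ) • e 2 - (e 0 + e 1 + e 2)

/-- The compact roots `{±γ₁, ±γ₂}`. -/
def Δk : Set E3 := {γ1, -γ1, γ2, -γ2}

/-- The positive compact roots `{γ₁, γ₂}`. -/
def Δplusk : Set E3 := {γ1, γ2}

/-- The noncompact roots (8 of them). -/
def Δp : Set E3 := ΔG2 \ Δk

def ϖ1 : E3 := (2 : ℝ)⁻¹ • γ1

def ϖ2 : E3 := (2 : ℝ)⁻¹ • γ2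

/-- `ρ_c = ϖ₁ + ϖ₂`. -/
def ρc : E3 := ϖ1 + ϖ2

/-- The K-type `m₁ϖ₁ + m₂ϖ₂`. -/
def mu (m₁ m₂ : ℕ) : E3 := (m₁ : ℝ) • ϖ1 + (m₂ : ℝ) • ϖ2

/-- The spin norm: the minimum over compatible `P ⊆ Δ(p)` of `‖{μ − ρ(P)} + ρ_c‖`,
where `{ξ}` is the unique `Δ⁺(k)`-dominant element of the `W(k)`-orbit of `ξ`. -/
def spinNorm (μ : E3) : ℝ :=
  sInf {r | ∃ P ⊆ Δp, IsPosSystem ΔG2 (Δplusk ∪ P) ∧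
    ∃ d : E3, IsDom Δplusk d ∧ (∃ w ∈ WeylGroup Δk, w (μ - halfSum P) = d) ∧
      r = ‖d + ρc‖}

/-- The lambda norm `‖λ_a(μ)‖`, where `λ_a(μ)` is the point of the closed dominant
cone (inside `V`) of a positive system `D` of `ΔG2` making `μ + 2ρ_c` dominant
which is nearest to `μ + 2ρ_c − ρ'`. -/
def lambdaNorm (μ : E3) : ℝ :=
  sInf {r | ∃ D : Set E3, IsPosSystem ΔG2 D ∧
    (∀ α ∈ D, 0 ≤ ⟪μ + (2 : ℝ) • ρc, α⟫) ∧
    ∃ la : E3, InV la ∧ (∀ α ∈ D, 0 ≤ ⟪la, α⟫) ∧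
      (∀ v : E3, InV v → (∀ α ∈ D, 0 ≤ ⟪v, α⟫) →
        ‖μ + (2 : ℝ) • ρc - halfSum D - la‖ ≤ ‖μ + (2 : ℝ) • ρc - halfSum D - v‖) ∧
      r = ‖la‖}

section InnerProductSpace

variable {F : Type*} [NormedAddCommGroup F] [InnerProductSpace ℝ F]

lemma sq_norm_sub_add_sq_norm_sub_le {x p v : F} (h : ⟪x - p, v - p⟫ ≤ 0) :
    ‖x - p‖ ^ 2 + ‖v - p‖ ^ 2 ≤ ‖x - v‖ ^ 2 := by
  have := norm_sub_sq_real (x - p) (v - p)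
  rw [sub_sub_sub_cancel_right] at this
  linarith

lemma reflection_orthogonal_singleton_apply (α x : F) :
    (ℝ ∙ α)ᗮ.reflection x = x - (2 * ⟪x, α⟫ / ⟪α, α⟫) • α := by
  rw [Submodule.reflection_orthogonal_apply, Submodule.reflection_singleton_apply,
    real_inner_self_eq_norm_sq, real_inner_comm, two_smul, ← add_smul, neg_sub, mul_div_assoc,
    two_mul]
  rfl

lemma inner_reflection_orthogonal_singleton_self (α x : F) :
    ⟪(ℝ ∙ α)ᗮ.reflection x, α⟫ = -⟪x, α⟫ := by
  calc ⟪(ℝ ∙ α)ᗮ.reflection x, α⟫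
      = -⟪(ℝ ∙ α)ᗮ.reflection x, (ℝ ∙ α)ᗮ.reflection α⟫ := by
        rw [Submodule.reflection_orthogonalComplement_singleton_eq_neg, inner_neg_right, neg_neg]
    _ = -⟪x, α⟫ := by rw [LinearIsometryEquiv.inner_map_map]

lemma inner_reflection_orthogonal_singleton_of_inner_eq_zero {α β : F} (h : ⟪α, β⟫ = 0)
    (x : F) : ⟪(ℝ ∙ α)ᗮ.reflection x, β⟫ = ⟪x, β⟫ := by
  have hβ : β ∈ (ℝ ∙ α)ᗮ := Submodule.mem_orthogonal_singleton_iff_inner_right.2 h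
  calc ⟪(ℝ ∙ α)ᗮ.reflection x, β⟫
      = ⟪(ℝ ∙ α)ᗮ.reflection x, (ℝ ∙ α)ᗮ.reflection β⟫ := by
        rw [Submodule.reflection_mem_subspace_eq_self hβ]
    _ = ⟪x, β⟫ := LinearIsometryEquiv.inner_map_map _ _ _

lemma span_singleton_neg (α : F) : (ℝ ∙ -α) = (ℝ ∙ α) := by
  rw [← Set.neg_singleton, Submodule.span_neg]

end InnerProductSpace

/-! ### Coordinates -/

def vec3 (a b c : ℝ) : E3 := !₂[a, b, c]

@[simp] lemma vec3_apply_zero (a b c : ℝ) : vec3 a b c 0 = a := rfl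
@[simp] lemma vec3_apply_one (a b c : ℝ) : vec3 a b c 1 = b := rfl
@[simp] lemma vec3_apply_two (a b c : ℝ) : vec3 a b c 2 = c := rfl

lemma vec3_eta (x : E3) : vec3 (x 0) (x 1) (x 2) = x := by
  ext i; fin_cases i <;> rfl

lemma exists_eq_vec3 (x : E3) : ∃ a b c : ℝ, x = vec3 a b c := ⟨_, _, _, (vec3_eta x).symm⟩

@[simp] lemma vec3_inj {a b c a' b' c' : ℝ} :
    vec3 a b c = vec3 a' b' c' ↔ a = a' ∧ b = b' ∧ c = c' := by
  refine ⟨fun h => ⟨congrArg (· 0) h, congrArg (· 1) h, congrArg (· 2) h⟩, ?_⟩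
  rintro ⟨rfl, rfl, rfl⟩; rfl

@[simp] lemma vec3_add (a b c a' b' c' : ℝ) :
    vec3 a b c + vec3 a' b' c' = vec3 (a + a') (b + b') (c + c') := by
  rw [← vec3_eta (vec3 a b c + _)]; rfl

@[simp] lemma vec3_sub (a b c a' b' c' : ℝ) :
    vec3 a b c - vec3 a' b' c' = vec3 (a - a') (b - b') (c - c') := by
  rw [← vec3_eta (vec3 a b c - _)]; rfl

@[simp] lemma vec3_neg (a b c : ℝ) : -vec3 a b c = vec3 (-a) (-b) (-c) := by
  rw [← vec3_eta (-vec3 a b c)]; rfl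

@[simp] lemma vec3_smul (r a b c : ℝ) : r • vec3 a b c = vec3 (r * a) (r * b) (r * c) := by
  rw [← vec3_eta (r • vec3 a b c)]; rfl

lemma vec3_zero : vec3 0 0 0 = 0 := by
  rw [← vec3_eta 0]; rfl

@[simp] lemma inner_vec3 (a b c a' b' c' : ℝ) :
    ⟪vec3 a b c, vec3 a' b' c'⟫ = a * a' + b * b' + c * c' := by
  simp [vec3, PiLp.inner_apply, Fin.sum_univ_three, mul_comm]

lemma norm_vec3 (a b c : ℝ) : ‖vec3 a b c‖ = √(a ^ 2 + b ^ 2 + c ^ 2) := by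
  rw [norm_eq_sqrt_real_inner, inner_vec3]
  ring_nf

@[simp] lemma InV_vec3 {a b c : ℝ} : InV (vec3 a b c) ↔ a + b + c = 0 := Iff.rfl

lemma e_zero : e 0 = vec3 1 0 0 := by rw [← vec3_eta (e _)]; simp [e]
lemma e_one : e 1 = vec3 0 1 0 := by rw [← vec3_eta (e _)]; simp [e]
lemma e_two : e 2 = vec3 0 0 1 := by rw [← vec3_eta (e _)]; simp [e]

lemma γ1_eq : γ1 = vec3 1 (-1) 0 := by simp [γ1, e_zero, e_one]
lemma γ2_eq : γ2 = vec3 (-1) (-1) 2 := by simp [γ2, e_zero, e_one, e_two]; norm_num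
lemma ρc_eq : ρc = vec3 0 (-1) 1 := by simp [ρc, ϖ1, ϖ2, γ1_eq, γ2_eq]; norm_num

lemma mu_eq (m₁ m₂ : ℕ) : mu m₁ m₂ = vec3 ((m₁ - m₂) / 2) (-(m₁ + m₂) / 2) m₂ := by
  simp only [mu, ϖ1, ϖ2, γ1_eq, γ2_eq, vec3_smul, vec3_add, vec3_inj]
  refine ⟨?_, ?_, ?_⟩ <;> ring

lemma mu_add_two_smul_ρc (m₁ m₂ : ℕ) :
    mu m₁ m₂ + (2 : ℝ) • ρc = vec3 ((m₁ - m₂) / 2) (-(m₁ + m₂) / 2 - 2) (m₂ + 2) := by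
  simp only [mu_eq, ρc_eq, vec3_smul, vec3_add, vec3_inj]
  refine ⟨?_, ?_, ?_⟩ <;> ring

lemma ΔG2_eq : ΔG2 = {vec3 1 (-1) 0, vec3 (-1) 1 0, vec3 1 0 (-1), vec3 (-1) 0 1,
    vec3 0 1 (-1), vec3 0 (-1) 1, vec3 2 (-1) (-1), vec3 (-2) 1 1, vec3 (-1) 2 (-1),
    vec3 1 (-2) 1, vec3 (-1) (-1) 2, vec3 1 1 (-2)} := by
  ext x
  simp only [ΔG2, Set.mem_ofPred_eq, Fin.exists_fin_succ, Fin.exists_fin_zero,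
    Set.mem_insert_iff, Set.mem_singleton_iff]
  norm_num [e_zero, e_one, e_two]
  tauto

lemma neg_mem_ΔG2 {α : E3} (hα : α ∈ ΔG2) : -α ∈ ΔG2 := by
  rcases hα with ⟨i, j, hij, rfl⟩ | ⟨i, rfl | rfl⟩
  · exact Or.inl ⟨j, i, hij.symm, by abel⟩
  · exact Or.inr ⟨i, Or.inr (by abel)⟩
  · exact Or.inr ⟨i, Or.inl (by abel)⟩

/-! ### Positive systems containing `Δ⁺(k)` -/

-- The noncompact roots positive on `(2,-3,1)`, `(1,-3,2)` and `(-1,-2,3)` respectively; these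
-- three vectors are the half sums of the positive systems `Δplusk ∪ Pᵢ`.
def P1 : Set E3 := {vec3 1 0 (-1), vec3 0 (-1) 1, vec3 2 (-1) (-1), vec3 1 (-2) 1}
def P2 : Set E3 := {vec3 (-1) 0 1, vec3 0 (-1) 1, vec3 2 (-1) (-1), vec3 1 (-2) 1}
def P3 : Set E3 := {vec3 (-1) 0 1, vec3 0 (-1) 1, vec3 (-2) 1 1, vec3 1 (-2) 1}

-- In this lemma and the next two, the hypotheses are positivity on the two simple roots.
lemma Δplusk_union_P1 {a b c : ℝ} (h₁ : c < a) (h₂ : a + b < 2 * c) :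
    Δplusk ∪ P1 = {α | α ∈ ΔG2 ∧ 0 < ⟪α, vec3 a b c⟫} := by
  ext α
  simp only [Δplusk, P1, γ1_eq, γ2_eq, Set.mem_union, Set.mem_insert_iff, Set.mem_singleton_iff,
    Set.mem_ofPred_eq, ΔG2_eq]
  constructor
  · rintro ((rfl | rfl) | rfl | rfl | rfl | rfl) <;> norm_num <;> linarith
  · rintro ⟨rfl | rfl | rfl | rfl | rfl | rfl | rfl | rfl | rfl | rfl | rfl | rfl, hpos⟩ <;>
      norm_num at hpos ⊢ <;> linarith

lemma Δplusk_union_P2 {a b c : ℝ} (h₁ : a < c) (h₂ : b + c < 2 * a) :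
    Δplusk ∪ P2 = {α | α ∈ ΔG2 ∧ 0 < ⟪α, vec3 a b c⟫} := by
  ext α
  simp only [Δplusk, P2, γ1_eq, γ2_eq, Set.mem_union, Set.mem_insert_iff, Set.mem_singleton_iff,
    Set.mem_ofPred_eq, ΔG2_eq]
  constructor
  · rintro ((rfl | rfl) | rfl | rfl | rfl | rfl) <;> norm_num <;> linarith
  · rintro ⟨rfl | rfl | rfl | rfl | rfl | rfl | rfl | rfl | rfl | rfl | rfl | rfl, hpos⟩ <;>
      norm_num at hpos ⊢ <;> linarith

lemma Δplusk_union_P3 {a b c : ℝ} (h₁ : b < a) (h₂ : 2 * a < b + c) :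
    Δplusk ∪ P3 = {α | α ∈ ΔG2 ∧ 0 < ⟪α, vec3 a b c⟫} := by
  ext α
  simp only [Δplusk, P3, γ1_eq, γ2_eq, Set.mem_union, Set.mem_insert_iff, Set.mem_singleton_iff,
    Set.mem_ofPred_eq, ΔG2_eq]
  constructor
  · rintro ((rfl | rfl) | rfl | rfl | rfl | rfl) <;> norm_num <;> linarith
  · rintro ⟨rfl | rfl | rfl | rfl | rfl | rfl | rfl | rfl | rfl | rfl | rfl | rfl, hpos⟩ <;>
      norm_num at hpos ⊢ <;> linarith

lemma isPosSystem_Δplusk_union_P1 : IsPosSystem ΔG2 (Δplusk ∪ P1) :=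
  ⟨vec3 2 (-3) 1, by norm_num, by norm_num [ΔG2_eq], Δplusk_union_P1 (by norm_num) (by norm_num)⟩

lemma isPosSystem_Δplusk_union_P2 : IsPosSystem ΔG2 (Δplusk ∪ P2) :=
  ⟨vec3 1 (-3) 2, by norm_num, by norm_num [ΔG2_eq], Δplusk_union_P2 (by norm_num) (by norm_num)⟩

lemma isPosSystem_Δplusk_union_P3 : IsPosSystem ΔG2 (Δplusk ∪ P3) :=
  ⟨vec3 (-1) (-2) 3, by norm_num, by norm_num [ΔG2_eq],
    Δplusk_union_P3 (by norm_num) (by norm_num)⟩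

lemma IsPosSystem.mem_or_neg_mem {S D : Set E3} (hD : IsPosSystem S D) {α : E3} (hα : α ∈ S)
    (hαneg : -α ∈ S) : α ∈ D ∨ -α ∈ D := by
  obtain ⟨v, -, hreg, rfl⟩ := hD
  rcases (hreg α hα).lt_or_gt with h | h
  · exact Or.inr ⟨hαneg, by rw [inner_neg_left]; linarith⟩
  · exact Or.inl ⟨hα, h⟩

lemma IsPosSystem.mem_of_isDom {S D : Set E3} (hD : IsPosSystem S D) {x α : E3}
    (hx : IsDom D x) (hα : α ∈ S) (hαneg : -α ∈ S) (hxα : 0 < ⟪x, α⟫) : α ∈ D :=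
  (hD.mem_or_neg_mem hα hαneg).resolve_right fun h => by
    have := hx _ h
    rw [inner_neg_right] at this
    linarith

lemma eq_Δplusk_union_of_isPosSystem {D : Set E3} (hD : IsPosSystem ΔG2 D) (h₁ : γ1 ∈ D)
    (h₂ : γ2 ∈ D) : D = Δplusk ∪ P1 ∨ D = Δplusk ∪ P2 ∨ D = Δplusk ∪ P3 := by
  obtain ⟨v, -, hreg, rfl⟩ := hD
  obtain ⟨a, b, c, rfl⟩ := exists_eq_vec3 v
  have hab : b < a := by simpa [γ1_eq] using h₁.2
  have hc : a + b < 2 * c := by have := h₂.2; simp [γ2_eq] at this; linarith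
  have hac : a - c ≠ 0 := fun h =>
    hreg (vec3 1 0 (-1)) (by simp [ΔG2_eq]) (by simp; linarith)
  have ha : 2 * a - b - c ≠ 0 := fun h =>
    hreg (vec3 2 (-1) (-1)) (by simp [ΔG2_eq]) (by simp; linarith)
  rcases hac.lt_or_gt with hac | hac
  · rcases ha.lt_or_gt with ha | ha
    · exact Or.inr <| Or.inr (Δplusk_union_P3 hab (by linarith)).symm
    · exact Or.inr <| Or.inl (Δplusk_union_P2 (by linarith) (by linarith)).symm
  · exact Or.inl (Δplusk_union_P1 (by linarith) hc).symm

lemma P_subset_Δp {P : Set E3} (hP : P = P1 ∨ P = P2 ∨ P = P3) : P ⊆ Δp := by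
  rcases hP with rfl | rfl | rfl <;>
    norm_num [P1, P2, P3, Δp, Δk, γ1_eq, γ2_eq, Set.insert_subset_iff, ΔG2_eq]

lemma disjoint_Δplusk_Δp : Disjoint Δplusk Δp :=
  Set.disjoint_sdiff_right.mono_left (by simp [Δplusk, Δk, Set.insert_subset_iff])

lemma eq_of_Δplusk_union_eq {P Q : Set E3} (hP : P ⊆ Δp) (hQ : Q ⊆ Δp)
    (h : Δplusk ∪ P = Δplusk ∪ Q) : P = Q := by
  have cancel : ∀ {R : Set E3}, R ⊆ Δp → (Δplusk ∪ R) \ Δplusk = R := fun hR =>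
    Set.union_sdiff_cancel_left (Set.disjoint_iff.1 (disjoint_Δplusk_Δp.mono_right hR))
  rw [← cancel hP, h, cancel hQ]

lemma isPosSystem_Δplusk_union_iff {P : Set E3} (hP : P ⊆ Δp) :
    IsPosSystem ΔG2 (Δplusk ∪ P) ↔ P = P1 ∨ P = P2 ∨ P = P3 := by
  constructor
  · intro h
    refine (eq_Δplusk_union_of_isPosSystem h (by simp [Δplusk]) (by simp [Δplusk])).imp ?_
      (Or.imp ?_ ?_) <;>
      exact eq_of_Δplusk_union_eq hP (P_subset_Δp (by simp))
  · rintro (rfl | rfl | rfl)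
    exacts [isPosSystem_Δplusk_union_P1, isPosSystem_Δplusk_union_P2, isPosSystem_Δplusk_union_P3]

lemma halfSum_union {S T : Set E3} (h : Disjoint S T) (hS : S.Finite) (hT : T.Finite) :
    halfSum (S ∪ T) = halfSum S + halfSum T := by
  rw [halfSum, halfSum, halfSum, finsum_mem_union h hS hT, smul_add]

lemma halfSum_Δplusk : halfSum Δplusk = ρc := by
  rw [halfSum, Δplusk, finsum_mem_pair, ρc, ϖ1, ϖ2, smul_add]
  simp [γ1_eq, γ2_eq]

lemma halfSum_Δplusk_union {P : Set E3} (hP : P ⊆ Δp) :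
    halfSum (Δplusk ∪ P) = ρc + halfSum P := by
  have hfin : P.Finite :=
    (ΔG2_eq ▸ Set.toFinite _ : ΔG2.Finite).subset (hP.trans Set.sdiff_subset)
  rw [halfSum_union (disjoint_Δplusk_Δp.mono_right hP) (by simp [Δplusk]) hfin, halfSum_Δplusk]

lemma halfSum_P1 : halfSum P1 = vec3 2 (-2) 0 := by
  rw [halfSum, P1, finsum_mem_insert, finsum_mem_insert, finsum_mem_pair] <;> norm_num

lemma halfSum_P2 : halfSum P2 = vec3 1 (-2) 1 := by
  rw [halfSum, P2, finsum_mem_insert, finsum_mem_insert, finsum_mem_pair] <;> norm_num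

lemma halfSum_P3 : halfSum P3 = vec3 (-1) (-1) 2 := by
  rw [halfSum, P3, finsum_mem_insert, finsum_mem_insert, finsum_mem_pair] <;> norm_num

/-! ### The spin norm -/

lemma isReflIn_reflection {Δ : Set E3} {α : E3} (hα : α ∈ Δ) :
    IsReflIn Δ (ℝ ∙ α)ᗮ.reflection :=
  ⟨α, hα, reflection_orthogonal_singleton_apply α⟩

lemma eq_reflection_of_isReflIn {Δ : Set E3} {r : E3 ≃ₗᵢ[ℝ] E3} (hr : IsReflIn Δ r) :
    ∃ α ∈ Δ, r = (ℝ ∙ α)ᗮ.reflection := by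
  obtain ⟨α, hα, h⟩ := hr
  exact ⟨α, hα, LinearIsometryEquiv.ext fun x =>
    (h x).trans (reflection_orthogonal_singleton_apply α x).symm⟩

lemma apply_eq_of_mem_WeylGroup {β : Type*} {Δ : Set E3} {g : E3 → β}
    (hg : ∀ r, IsReflIn Δ r → ∀ x, g (r x) = g x) {w : E3 ≃ₗᵢ[ℝ] E3} (hw : w ∈ WeylGroup Δ)
    (x : E3) : g (w x) = g x := by
  induction hw using Subgroup.closure_induction generalizing x with
  | mem r hr => exact hg r hr x
  | one => rfl
  | mul w w' _ _ hw hw' => exact (hw (w' x)).trans (hw' x)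
  | inv w _ hw => rw [← hw (w⁻¹ x)]; exact congrArg g (w.apply_symm_apply x)

def ν : E3 := vec3 1 1 1

lemma inner_γ1_γ2 : ⟪γ1, γ2⟫ = 0 := by norm_num [γ1_eq, γ2_eq]
lemma inner_γ1_ν : ⟪γ1, ν⟫ = 0 := by norm_num [γ1_eq, ν]
lemma inner_γ2_ν : ⟪γ2, ν⟫ = 0 := by norm_num [γ2_eq, ν]

lemma norm_eq_sqrt_inner (v : E3) :
    ‖v‖ = √((3 * ⟪v, γ1⟫ ^ 2 + ⟪v, γ2⟫ ^ 2 + 2 * ⟪v, ν⟫ ^ 2) / 6) := by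
  obtain ⟨a, b, c, rfl⟩ := exists_eq_vec3 v
  rw [norm_eq_sqrt_real_inner]
  congr 1
  simp only [inner_vec3, γ1_eq, γ2_eq, ν]
  ring

lemma invariants_of_isReflIn {r : E3 ≃ₗᵢ[ℝ] E3} (hr : IsReflIn Δk r) (x : E3) :
    |⟪r x, γ1⟫| = |⟪x, γ1⟫| ∧ |⟪r x, γ2⟫| = |⟪x, γ2⟫| ∧ ⟪r x, ν⟫ = ⟪x, ν⟫ := by
  obtain ⟨α, hα, rfl⟩ := eq_reflection_of_isReflIn hr
  have h₂₁ : ⟪γ2, γ1⟫ = 0 := by rw [real_inner_comm, inner_γ1_γ2]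
  rcases hα with rfl | rfl | rfl | rfl <;>
    simp [inner_reflection_orthogonal_singleton_self, span_singleton_neg,
      inner_reflection_orthogonal_singleton_of_inner_eq_zero, inner_γ1_γ2, h₂₁, inner_γ1_ν,
      inner_γ2_ν]

lemma invariants_of_mem_WeylGroup {w : E3 ≃ₗᵢ[ℝ] E3} (hw : w ∈ WeylGroup Δk) (x : E3) :
    |⟪w x, γ1⟫| = |⟪x, γ1⟫| ∧ |⟪w x, γ2⟫| = |⟪x, γ2⟫| ∧ ⟪w x, ν⟫ = ⟪x, ν⟫ :=
  ⟨apply_eq_of_mem_WeylGroup (g := fun y => |⟪y, γ1⟫|)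
      (fun _ hr x => (invariants_of_isReflIn hr x).1) hw x,
    apply_eq_of_mem_WeylGroup (g := fun y => |⟪y, γ2⟫|)
      (fun _ hr x => (invariants_of_isReflIn hr x).2.1) hw x,
    apply_eq_of_mem_WeylGroup (g := fun y => ⟪y, ν⟫)
      (fun _ hr x => (invariants_of_isReflIn hr x).2.2) hw x⟩

lemma exists_mem_WeylGroup_inner_nonneg {α : E3} (hα : α ∈ Δk) (x : E3) :
    ∃ w ∈ WeylGroup Δk, 0 ≤ ⟪w x, α⟫ ∧ ∀ β, ⟪α, β⟫ = 0 → ⟪w x, β⟫ = ⟪x, β⟫ := by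
  by_cases h : 0 ≤ ⟪x, α⟫
  · exact ⟨1, one_mem _, h, fun _ _ => rfl⟩
  · refine ⟨(ℝ ∙ α)ᗮ.reflection, Subgroup.subset_closure (isReflIn_reflection hα), ?_,
      fun β hβ => inner_reflection_orthogonal_singleton_of_inner_eq_zero hβ x⟩
    rw [inner_reflection_orthogonal_singleton_self]
    linarith

lemma exists_mem_WeylGroup_isDom (x : E3) : ∃ w ∈ WeylGroup Δk, IsDom Δplusk (w x) := by
  obtain ⟨w₂, hw₂, h₂, -⟩ := exists_mem_WeylGroup_inner_nonneg (α := γ2) (by simp [Δk]) x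
  obtain ⟨w₁, hw₁, h₁, horth⟩ :=
    exists_mem_WeylGroup_inner_nonneg (α := γ1) (by simp [Δk]) (w₂ x)
  refine ⟨w₁ * w₂, mul_mem hw₁ hw₂, ?_⟩
  rintro γ (rfl | rfl)
  · exact h₁
  · rw [LinearIsometryEquiv.coe_mul, Function.comp_apply, horth _ inner_γ1_γ2]
    exact h₂

/-- The value of `‖{ξ} + ρ_c‖`, read off from the `W(k)`-invariants of `ξ`. -/
def spinTerm (ξ : E3) : ℝ :=
  √((3 * (|⟪ξ, γ1⟫| + 1) ^ 2 + (|⟪ξ, γ2⟫| + 3) ^ 2 + 2 * ⟪ξ, ν⟫ ^ 2) / 6)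

lemma norm_add_ρc_of_isDom {w : E3 ≃ₗᵢ[ℝ] E3} (hw : w ∈ WeylGroup Δk) {ξ : E3}
    (hd : IsDom Δplusk (w ξ)) : ‖w ξ + ρc‖ = spinTerm ξ := by
  obtain ⟨h₁, h₂, hν⟩ := invariants_of_mem_WeylGroup hw ξ
  rw [abs_of_nonneg (hd γ1 (by simp [Δplusk]))] at h₁
  rw [abs_of_nonneg (hd γ2 (by simp [Δplusk]))] at h₂
  rw [norm_eq_sqrt_inner, spinTerm, inner_add_left, inner_add_left, inner_add_left, h₁, h₂, hν]
  norm_num [ρc_eq, γ1_eq, γ2_eq, ν]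

lemma spinNorm_eq_min (μ : E3) :
    spinNorm μ = min (spinTerm (μ - halfSum P1))
      (min (spinTerm (μ - halfSum P2)) (spinTerm (μ - halfSum P3))) := by
  refine (congrArg sInf ?_).trans <|
    (csInf_insert (Set.toFinite _).bddBelow (Set.insert_nonempty _ _)).trans
      (congrArg _ (csInf_pair _ _))
  ext r
  simp only [Set.mem_ofPred_eq, Set.mem_insert_iff, Set.mem_singleton_iff]
  constructor
  · rintro ⟨P, hP, hpos, _, hd, ⟨w, hw, rfl⟩, rfl⟩
    rw [norm_add_ρc_of_isDom hw hd]
    rcases (isPosSystem_Δplusk_union_iff hP).1 hpos with rfl | rfl | rfl <;> simp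
  · intro hr
    obtain ⟨P, hP, rfl⟩ : ∃ P, (P = P1 ∨ P = P2 ∨ P = P3) ∧ r = spinTerm (μ - halfSum P) := by
      rcases hr with rfl | rfl | rfl <;> simp
    obtain ⟨w, hw, hd⟩ := exists_mem_WeylGroup_isDom (μ - halfSum P)
    exact ⟨P, P_subset_Δp hP, (isPosSystem_Δplusk_union_iff (P_subset_Δp hP)).2 hP, _, hd,
      ⟨w, hw, rfl⟩, (norm_add_ρc_of_isDom hw hd).symm⟩

-- `6 ‖m₁ϖ₁ + m₂ϖ₂‖²_spin` at `(x, y) = (m₁, m₂)`: the half sums of `P₁, P₂, P₃` pair with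
-- `(γ₁, γ₂)` to `(4, 0)`, `(3, 3)`, `(0, 6)`.
def spinSq (x y : ℝ) : ℝ :=
  min (3 * (|x - 4| + 1) ^ 2 + (|3 * y| + 3) ^ 2)
    (min (3 * (|x - 3| + 1) ^ 2 + (|3 * y - 3| + 3) ^ 2)
      (3 * (|x| + 1) ^ 2 + (|3 * y - 6| + 3) ^ 2))

lemma spinTerm_mu_sub (m₁ m₂ : ℕ) (ρ : E3) : spinTerm (mu m₁ m₂ - ρ) =
    √((3 * (|m₁ - ⟪ρ, γ1⟫| + 1) ^ 2 + (|3 * m₂ - ⟪ρ, γ2⟫| + 3) ^ 2 + 2 * ⟪ρ, ν⟫ ^ 2) / 6) := by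
  have h₁ : ⟪mu m₁ m₂, γ1⟫ = m₁ := by simp only [mu_eq, γ1_eq, inner_vec3]; ring
  have h₂ : ⟪mu m₁ m₂, γ2⟫ = 3 * m₂ := by simp only [mu_eq, γ2_eq, inner_vec3]; ring
  have hν : ⟪mu m₁ m₂, ν⟫ = 0 := by simp only [mu_eq, ν, inner_vec3]; ring
  rw [spinTerm, inner_sub_left, inner_sub_left, inner_sub_left, h₁, h₂, hν, zero_sub, neg_sq]

lemma spinNorm_mu (m₁ m₂ : ℕ) : spinNorm (mu m₁ m₂) = √(spinSq m₁ m₂ / 6) := by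
  have hmono : Monotone fun t : ℝ => √(t / 6) := fun _ _ h => Real.sqrt_le_sqrt (by linarith)
  rw [spinSq, hmono.map_min, hmono.map_min, spinNorm_eq_min, spinTerm_mu_sub, spinTerm_mu_sub,
    spinTerm_mu_sub, halfSum_P1, halfSum_P2, halfSum_P3]
  simp only [γ1_eq, γ2_eq, ν, inner_vec3]
  norm_num

/-! ### The lambda norm -/

/-- `p` is the point of the closed chamber `{v ∈ V | IsDom D v}` nearest to `x`, in the form of
the variational inequality characterising nearest points of convex sets. -/
def IsChamberProj (D : Set E3) (x p : E3) : Prop :=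
  InV p ∧ IsDom D p ∧ ∀ v, InV v → IsDom D v → ⟪x - p, v - p⟫ ≤ 0

lemma IsChamberProj.norm_sub_le {D : Set E3} {x p v : E3} (h : IsChamberProj D x p)
    (hv : InV v) (hvD : IsDom D v) : ‖x - p‖ ≤ ‖x - v‖ := by
  have := sq_norm_sub_add_sq_norm_sub_le (h.2.2 v hv hvD)
  nlinarith [norm_nonneg (x - p), norm_nonneg (x - v), sq_nonneg ‖v - p‖]

lemma IsChamberProj.eq_of_norm_sub_le {D : Set E3} {x p q : E3} (h : IsChamberProj D x p)
    (hq : InV q) (hqD : IsDom D q) (hle : ‖x - q‖ ≤ ‖x - p‖) : q = p := by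
  have := sq_norm_sub_add_sq_norm_sub_le (h.2.2 q hq hqD)
  have hqp : ‖q - p‖ ^ 2 = 0 :=
    le_antisymm (by nlinarith [norm_nonneg (x - q), norm_nonneg (x - p)]) (sq_nonneg _)
  rwa [sq_eq_zero_iff, norm_eq_zero, sub_eq_zero] at hqp

lemma isChamberProj_self {D : Set E3} {p : E3} (hp : InV p) (hpD : IsDom D p) :
    IsChamberProj D p p :=
  ⟨hp, hpD, fun v _ _ => by simp⟩

/-- The Karush–Kuhn–Tucker conditions with a single active wall `α`. -/
lemma isChamberProj_sub_smul {D : Set E3} {p α : E3} {c : ℝ} (hp : InV p) (hpD : IsDom D p)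
    (hα : α ∈ D) (hc : 0 ≤ c) (hpα : c * ⟪p, α⟫ = 0) : IsChamberProj D (p - c • α) p := by
  refine ⟨hp, hpD, fun v _ hv => ?_⟩
  rw [sub_sub_cancel_left, inner_neg_left, real_inner_smul_left, inner_sub_right,
    real_inner_comm v α, real_inner_comm p α]
  nlinarith [hv α hα]

lemma lambdaNorm_eq_norm {μ la : E3}
    (hex : ∃ D, IsPosSystem ΔG2 D ∧ IsDom D (μ + (2 : ℝ) • ρc))
    (hla : ∀ D, IsPosSystem ΔG2 D → IsDom D (μ + (2 : ℝ) • ρc) →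
      IsChamberProj D (μ + (2 : ℝ) • ρc - halfSum D) la) :
    lambdaNorm μ = ‖la‖ := by
  refine (congrArg sInf ?_).trans (csInf_singleton ‖la‖)
  ext r
  simp only [Set.mem_ofPred_eq, Set.mem_singleton_iff]
  constructor
  · rintro ⟨D, hD, hdom, la', hV, hdom', hmin, rfl⟩
    have h := hla D hD hdom
    rw [h.eq_of_norm_sub_le hV hdom' (hmin _ h.1 h.2.1)]
  · rintro rfl
    obtain ⟨D, hD, hdom⟩ := hex
    have h := hla D hD hdom
    exact ⟨D, hD, hdom, la, h.1, h.2.1, fun v hv hvD => h.norm_sub_le hv hvD, rfl⟩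

lemma isDom_Δplusk_union_P1_iff {a b c : ℝ} :
    IsDom (Δplusk ∪ P1) (vec3 a b c) ↔ c ≤ a ∧ a + b ≤ 2 * c := by
  simp only [IsDom, Δplusk, P1, γ1_eq, γ2_eq, Set.mem_union, Set.mem_insert_iff,
    Set.mem_singleton_iff, or_imp, forall_and, forall_eq, inner_vec3]
  constructor
  · intro h; constructor <;> linarith
  · intro h; refine ⟨⟨?_, ?_⟩, ?_, ?_, ?_, ?_⟩ <;> linarith

lemma isDom_Δplusk_union_P2_iff {a b c : ℝ} :
    IsDom (Δplusk ∪ P2) (vec3 a b c) ↔ a ≤ c ∧ b + c ≤ 2 * a := by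
  simp only [IsDom, Δplusk, P2, γ1_eq, γ2_eq, Set.mem_union, Set.mem_insert_iff,
    Set.mem_singleton_iff, or_imp, forall_and, forall_eq, inner_vec3]
  constructor
  · intro h; constructor <;> linarith
  · intro h; refine ⟨⟨?_, ?_⟩, ?_, ?_, ?_, ?_⟩ <;> linarith

lemma isDom_Δplusk_union_P3_iff {a b c : ℝ} :
    IsDom (Δplusk ∪ P3) (vec3 a b c) ↔ b ≤ a ∧ 2 * a ≤ b + c := by
  simp only [IsDom, Δplusk, P3, γ1_eq, γ2_eq, Set.mem_union, Set.mem_insert_iff,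
    Set.mem_singleton_iff, or_imp, forall_and, forall_eq, inner_vec3]
  constructor
  · intro h; constructor <;> linarith
  · intro h; refine ⟨⟨?_, ?_⟩, ?_, ?_, ?_, ?_⟩ <;> linarith

lemma eq_Δplusk_union_of_isDom_mu {m₁ m₂ : ℕ} {D : Set E3} (hD : IsPosSystem ΔG2 D)
    (hdom : IsDom D (mu m₁ m₂ + (2 : ℝ) • ρc)) :
    (D = Δplusk ∪ P1 ∧ 3 * m₂ + 4 ≤ m₁) ∨ (D = Δplusk ∪ P2 ∧ m₂ ≤ m₁ ∧ m₁ ≤ 3 * m₂ + 4) ∨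
      (D = Δplusk ∪ P3 ∧ m₁ ≤ m₂) := by
  have hm₁ : (0 : ℝ) ≤ m₁ := m₁.cast_nonneg
  have hm₂ : (0 : ℝ) ≤ m₂ := m₂.cast_nonneg
  have hγ : ∀ γ ∈ Δplusk, γ ∈ D := by
    have hΔ : Δplusk ⊆ ΔG2 := by simp [Δplusk, γ1_eq, γ2_eq, ΔG2_eq, Set.insert_subset_iff]
    intro γ hγ
    refine hD.mem_of_isDom hdom (hΔ hγ) (neg_mem_ΔG2 (hΔ hγ)) ?_
    rcases hγ with rfl | rfl <;> simp only [mu_add_two_smul_ρc, γ1_eq, γ2_eq, inner_vec3] <;>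
      linarith
  rcases eq_Δplusk_union_of_isPosSystem hD (hγ _ (Or.inl rfl)) (hγ _ (Or.inr rfl))
    with rfl | rfl | rfl <;> rw [mu_add_two_smul_ρc] at hdom
  · obtain ⟨h, -⟩ := isDom_Δplusk_union_P1_iff.1 hdom
    exact Or.inl ⟨rfl, by exact_mod_cast (by linarith : (3 * m₂ + 4 : ℝ) ≤ m₁)⟩
  · obtain ⟨h, h'⟩ := isDom_Δplusk_union_P2_iff.1 hdom
    exact Or.inr <| Or.inl ⟨rfl, by exact_mod_cast (by linarith : (m₂ : ℝ) ≤ m₁),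
      by exact_mod_cast (by linarith : (m₁ : ℝ) ≤ 3 * m₂ + 4)⟩
  · obtain ⟨-, h⟩ := isDom_Δplusk_union_P3_iff.1 hdom
    exact Or.inr <| Or.inr ⟨rfl, by exact_mod_cast (by linarith : (m₁ : ℝ) ≤ m₂)⟩

-- The three vectors are `μ + 2ρ_c - halfSum (Δplusk ∪ Pᵢ)`.
lemma lambdaNorm_mu_eq {m₁ m₂ : ℕ} {la : E3}
    (h₁ : 3 * m₂ + 4 ≤ m₁ → IsChamberProj (Δplusk ∪ P1)
      (vec3 ((m₁ - m₂) / 2 - 2) (-(m₁ + m₂) / 2 + 1) (m₂ + 1)) la)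
    (h₂ : m₂ ≤ m₁ → m₁ ≤ 3 * m₂ + 4 → IsChamberProj (Δplusk ∪ P2)
      (vec3 ((m₁ - m₂) / 2 - 1) (-(m₁ + m₂) / 2 + 1) m₂) la)
    (h₃ : m₁ ≤ m₂ → IsChamberProj (Δplusk ∪ P3)
      (vec3 ((m₁ - m₂) / 2 + 1) (-(m₁ + m₂) / 2) (m₂ - 1)) la) :
    lambdaNorm (mu m₁ m₂) = ‖la‖ := by
  have hx : ∀ {P}, (P = P1 ∨ P = P2 ∨ P = P3) →
      mu m₁ m₂ + (2 : ℝ) • ρc - halfSum (Δplusk ∪ P) = mu m₁ m₂ + ρc - halfSum P := by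
    intro P hP
    rw [halfSum_Δplusk_union (P_subset_Δp hP)]
    module
  have hm₁ : (0 : ℝ) ≤ m₁ := m₁.cast_nonneg
  have hm₂ : (0 : ℝ) ≤ m₂ := m₂.cast_nonneg
  refine lambdaNorm_eq_norm ?_ fun D hD hdom => ?_
  · rw [mu_add_two_smul_ρc]
    rcases le_total m₁ m₂ with h | h
    · have h' : (m₁ : ℝ) ≤ m₂ := by exact_mod_cast h
      exact ⟨_, isPosSystem_Δplusk_union_P3,
        isDom_Δplusk_union_P3_iff.2 ⟨by linarith, by linarith⟩⟩
    rcases le_total m₁ (3 * m₂ + 4) with h' | h'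
    · have h₀ : (m₂ : ℝ) ≤ m₁ := by exact_mod_cast h
      have h₀' : (m₁ : ℝ) ≤ 3 * m₂ + 4 := by exact_mod_cast h'
      exact ⟨_, isPosSystem_Δplusk_union_P2,
        isDom_Δplusk_union_P2_iff.2 ⟨by linarith, by linarith⟩⟩
    · have h₀' : (3 * m₂ + 4 : ℝ) ≤ m₁ := by exact_mod_cast h'
      exact ⟨_, isPosSystem_Δplusk_union_P1,
        isDom_Δplusk_union_P1_iff.2 ⟨by linarith, by linarith⟩⟩
  rcases eq_Δplusk_union_of_isDom_mu hD hdom with ⟨rfl, h⟩ | ⟨rfl, h, h'⟩ | ⟨rfl, h⟩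
  · convert h₁ h using 1
    rw [hx (Or.inl rfl), mu_eq, ρc_eq, halfSum_P1]
    simp only [vec3_add, vec3_sub, vec3_inj]
    refine ⟨?_, ?_, ?_⟩ <;> ring
  · convert h₂ h h' using 1
    rw [hx (Or.inr <| Or.inl rfl), mu_eq, ρc_eq, halfSum_P2]
    simp only [vec3_add, vec3_sub, vec3_inj]
    refine ⟨?_, ?_, ?_⟩ <;> ring
  · convert h₃ h using 1
    rw [hx (Or.inr <| Or.inr rfl), mu_eq, ρc_eq, halfSum_P3]
    simp only [vec3_add, vec3_sub, vec3_inj]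
    refine ⟨?_, ?_, ?_⟩ <;> ring

lemma lambdaNorm_mu_of_add_two_le {m₁ m₂ : ℕ} (h : m₁ + 2 ≤ m₂) :
    lambdaNorm (mu m₁ m₂) = √((3 * (m₁ + 1) ^ 2 + (3 * m₂ - 3) ^ 2) / 6) := by
  have h' : (m₁ + 2 : ℝ) ≤ m₂ := by exact_mod_cast h
  rw [lambdaNorm_mu_eq (fun _ => by omega) (fun _ _ => by omega) fun _ => isChamberProj_self
    (by simp only [InV_vec3]; ring) (isDom_Δplusk_union_P3_iff.2 ⟨by linarith, by linarith⟩),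
    norm_vec3]
  congr 1
  ring

lemma lambdaNorm_mu_of_three_mul_add_six_le {m₁ m₂ : ℕ} (h : 3 * m₂ + 6 ≤ m₁) :
    lambdaNorm (mu m₁ m₂) = √((3 * (m₁ - 3) ^ 2 + (3 * m₂ + 3) ^ 2) / 6) := by
  have h' : (3 * m₂ + 6 : ℝ) ≤ m₁ := by exact_mod_cast h
  have hm₂ : (0 : ℝ) ≤ m₂ := m₂.cast_nonneg
  rw [lambdaNorm_mu_eq (fun _ => isChamberProj_self (by simp only [InV_vec3]; ring)
    (isDom_Δplusk_union_P1_iff.2 ⟨by linarith, by linarith⟩)) (fun _ _ => by omega)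
    (fun _ => by omega), norm_vec3]
  congr 1
  ring

lemma lambdaNorm_mu_of_le_of_le {m₁ m₂ : ℕ} (h₁ : m₂ + 2 ≤ m₁) (h₂ : m₁ ≤ 3 * m₂ + 2) :
    lambdaNorm (mu m₁ m₂) = √((3 * (m₁ - 2) ^ 2 + (3 * m₂) ^ 2) / 6) := by
  have h₁' : (m₂ + 2 : ℝ) ≤ m₁ := by exact_mod_cast h₁
  have h₂' : (m₁ : ℝ) ≤ 3 * m₂ + 2 := by exact_mod_cast h₂
  rw [lambdaNorm_mu_eq (fun _ => by omega) (fun _ _ => isChamberProj_self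
    (by simp only [InV_vec3]; ring) (isDom_Δplusk_union_P2_iff.2 ⟨by linarith, by linarith⟩))
    (fun _ => by omega), norm_vec3]
  congr 1
  ring

-- On the two lines `m₁ = 3 m₂ + 4` and `m₁ = m₂` two positive systems are admissible, and
-- `λ_a` lies on the wall between their chambers.
lemma lambdaNorm_mu_of_eq_three_mul_add_four {m₁ m₂ : ℕ} (h : m₁ = 3 * m₂ + 4) :
    lambdaNorm (mu m₁ m₂) = √(9 * (2 * m₂ + 1) ^ 2 / 6) := by
  have h' : (m₁ : ℝ) = 3 * m₂ + 4 := by exact_mod_cast h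
  have hm₂ : (0 : ℝ) ≤ m₂ := m₂.cast_nonneg
  set la := vec3 ((2 * m₂ + 1) / 2) (-(2 * m₂ + 1)) (m₂ + 1 / 2)
  have hla : InV la := by simp only [la, InV_vec3]; ring
  rw [lambdaNorm_mu_eq (la := la) (fun _ => ?_) (fun _ _ => ?_) (fun _ => by omega), norm_vec3]
  · congr 1
    ring
  · convert isChamberProj_sub_smul (c := 1 / 2) (α := vec3 1 0 (-1)) hla
      (isDom_Δplusk_union_P1_iff.2 ⟨by linarith, by linarith⟩) (by simp [P1]) (by norm_num)
      (by simp only [la, inner_vec3]; ring) using 1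
    simp only [la, vec3_smul, vec3_sub, vec3_inj, h']
    refine ⟨?_, ?_, ?_⟩ <;> ring
  · convert isChamberProj_sub_smul (c := 1 / 2) (α := vec3 (-1) 0 1) hla
      (isDom_Δplusk_union_P2_iff.2 ⟨by linarith, by linarith⟩) (by simp [P2]) (by norm_num)
      (by simp only [la, inner_vec3]; ring) using 1
    simp only [la, vec3_smul, vec3_sub, vec3_inj, h']
    refine ⟨?_, ?_, ?_⟩ <;> ring

lemma lambdaNorm_mu_self {m : ℕ} (hm : 1 ≤ m) :
    lambdaNorm (mu m m) = √(3 * (2 * m - 1) ^ 2 / 6) := by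
  have hm' : (1 : ℝ) ≤ m := by exact_mod_cast hm
  set la := vec3 0 (-(m - 1 / 2)) (m - 1 / 2)
  have hla : InV la := by simp only [la, InV_vec3]; ring
  rw [lambdaNorm_mu_eq (la := la) (fun _ => by omega) (fun _ _ => ?_) (fun _ => ?_), norm_vec3]
  · congr 1
    ring
  · convert isChamberProj_sub_smul (c := 1 / 2) (α := vec3 2 (-1) (-1)) hla
      (isDom_Δplusk_union_P2_iff.2 ⟨by linarith, by linarith⟩) (by simp [P2]) (by norm_num)
      (by simp only [la, inner_vec3]; ring) using 1
    simp only [la, vec3_smul, vec3_sub, vec3_inj]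
    refine ⟨?_, ?_, ?_⟩ <;> ring
  · convert isChamberProj_sub_smul (c := 1 / 2) (α := vec3 (-2) 1 1) hla
      (isDom_Δplusk_union_P3_iff.2 ⟨by linarith, by linarith⟩) (by simp [P3]) (by norm_num)
      (by simp only [la, inner_vec3]; ring) using 1
    simp only [la, vec3_smul, vec3_sub, vec3_inj]
    refine ⟨?_, ?_, ?_⟩ <;> ring

lemma lambdaNorm_mu_zero : lambdaNorm (mu 0 0) = 0 := by
  have hV : InV 0 := by rw [← vec3_zero, InV_vec3]; ring
  have hD : ∀ D, IsDom D (0 : E3) := fun D γ _ => by simp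
  rw [lambdaNorm_mu_eq (la := 0) (fun _ => by omega) (fun _ _ => ?_) (fun _ => ?_), norm_zero]
  · convert isChamberProj_sub_smul (D := Δplusk ∪ P2) (c := 1) (α := γ1) hV (hD _)
      (by simp [Δplusk]) (by norm_num) (by simp) using 1
    simp [γ1_eq, ← vec3_zero]
  · convert isChamberProj_sub_smul (D := Δplusk ∪ P3) (c := 1) (α := vec3 (-1) 0 1) hV (hD _)
      (by simp [P3]) (by norm_num) (by simp) using 1
    simp [← vec3_zero]

/-! ### Comparison of the two norms -/

lemma spinSq_pos (x y : ℝ) : 0 < spinSq x y := by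
  simp only [spinSq, lt_min_iff]
  refine ⟨?_, ?_, ?_⟩ <;> positivity

lemma spinSq_of_add_two_le {x y : ℝ} (hx : 0 ≤ x) (h : x + 2 ≤ y) :
    spinSq x y = 3 * (x + 1) ^ 2 + (3 * y - 3) ^ 2 := by
  rw [spinSq, abs_of_nonneg hx, abs_of_nonneg (by linarith : 0 ≤ 3 * y),
    abs_of_nonneg (by linarith : 0 ≤ 3 * y - 3), abs_of_nonneg (by linarith : 0 ≤ 3 * y - 6)]
  refine le_antisymm (((min_le_right _ _).trans (min_le_right _ _)).trans_eq (by ring))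
    (le_min ?_ (le_min ?_ (le_of_eq (by ring))))
  · rcases abs_cases (x - 4) with ⟨h4, h4'⟩ | ⟨h4, h4'⟩ <;> rw [h4] <;> nlinarith
  · rcases abs_cases (x - 3) with ⟨h3, h3'⟩ | ⟨h3, h3'⟩ <;> rw [h3] <;> nlinarith

lemma spinSq_of_three_mul_add_six_le {x y : ℝ} (hy : 0 ≤ y) (h : 3 * y + 6 ≤ x) :
    spinSq x y = 3 * (x - 3) ^ 2 + (3 * y + 3) ^ 2 := by
  rw [spinSq, abs_of_nonneg (by linarith : 0 ≤ x - 4), abs_of_nonneg (by linarith : 0 ≤ x - 3),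
    abs_of_nonneg (by linarith : 0 ≤ x), abs_of_nonneg (by linarith : 0 ≤ 3 * y)]
  refine le_antisymm ((min_le_left _ _).trans_eq (by ring))
    (le_min (le_of_eq (by ring)) (le_min ?_ ?_))
  · rcases abs_cases (3 * y - 3) with ⟨h3, h3'⟩ | ⟨h3, h3'⟩ <;> rw [h3] <;> nlinarith
  · rcases abs_cases (3 * y - 6) with ⟨h6, h6'⟩ | ⟨h6, h6'⟩ <;> rw [h6] <;> nlinarith

lemma spinSq_of_le_of_le {x y : ℝ} (hy : 1 ≤ y) (h₁ : y + 2 ≤ x) (h₂ : x ≤ 3 * y + 2) :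
    spinSq x y = 3 * (x - 2) ^ 2 + (3 * y) ^ 2 := by
  rw [spinSq, abs_of_nonneg (by linarith : 0 ≤ x - 3), abs_of_nonneg (by linarith : 0 ≤ x),
    abs_of_nonneg (by linarith : 0 ≤ 3 * y), abs_of_nonneg (by linarith : 0 ≤ 3 * y - 3)]
  refine le_antisymm (((min_le_right _ _).trans (min_le_left _ _)).trans_eq (by ring))
    (le_min ?_ (le_min (le_of_eq (by ring)) ?_))
  · rcases abs_cases (x - 4) with ⟨h4, h4'⟩ | ⟨h4, h4'⟩ <;> rw [h4] <;> nlinarith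
  · rcases abs_cases (3 * y - 6) with ⟨h6, h6'⟩ | ⟨h6, h6'⟩ <;> rw [h6] <;> nlinarith

lemma lt_spinSq_three_mul_add_four {y : ℝ} (hy : 0 ≤ y) :
    9 * (2 * y + 1) ^ 2 < spinSq (3 * y + 4) y := by
  simp only [spinSq, lt_min_iff]
  refine ⟨?_, ?_, ?_⟩
  · rw [abs_of_nonneg (by linarith : 0 ≤ 3 * y + 4 - 4), abs_of_nonneg (by linarith : 0 ≤ 3 * y)]
    nlinarith
  · rw [abs_of_nonneg (by linarith : 0 ≤ 3 * y + 4 - 3)]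
    rcases abs_cases (3 * y - 3) with ⟨h3, h3'⟩ | ⟨h3, h3'⟩ <;> rw [h3] <;> nlinarith
  · rw [abs_of_nonneg (by linarith : 0 ≤ 3 * y + 4)]
    rcases abs_cases (3 * y - 6) with ⟨h6, h6'⟩ | ⟨h6, h6'⟩ <;> rw [h6] <;> nlinarith

lemma lt_spinSq_self {x : ℝ} (hx : 1 ≤ x) : 3 * (2 * x - 1) ^ 2 < spinSq x x := by
  simp only [spinSq, lt_min_iff]
  refine ⟨?_, ?_, ?_⟩
  · rw [abs_of_nonneg (by linarith : 0 ≤ 3 * x)]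
    rcases abs_cases (x - 4) with ⟨h4, h4'⟩ | ⟨h4, h4'⟩ <;> rw [h4] <;> nlinarith
  · rw [abs_of_nonneg (by linarith : 0 ≤ 3 * x - 3)]
    rcases abs_cases (x - 3) with ⟨h3, h3'⟩ | ⟨h3, h3'⟩ <;> rw [h3] <;> nlinarith
  · rw [abs_of_nonneg (by linarith : 0 ≤ x)]
    rcases abs_cases (3 * x - 6) with ⟨h6, h6'⟩ | ⟨h6, h6'⟩ <;> rw [h6] <;> nlinarith

lemma spinNorm_eq_of_spinSq_eq {m₁ m₂ : ℕ} {L : ℝ} (hlam : lambdaNorm (mu m₁ m₂) = √(L / 6))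
    (h : spinSq m₁ m₂ = L) : spinNorm (mu m₁ m₂) = lambdaNorm (mu m₁ m₂) := by
  rw [spinNorm_mu, hlam, h]

lemma lambdaNorm_lt_spinNorm_of_lt_spinSq {m₁ m₂ : ℕ} {L : ℝ} (hL : 0 ≤ L)
    (hlam : lambdaNorm (mu m₁ m₂) = √(L / 6)) (h : L < spinSq m₁ m₂) :
    lambdaNorm (mu m₁ m₂) < spinNorm (mu m₁ m₂) := by
  rw [spinNorm_mu, hlam]
  exact Real.sqrt_lt_sqrt (by positivity) (by linarith)

lemma spinNorm_eq_lambdaNorm_of_add_two_le {m₁ m₂ : ℕ} (h : m₁ + 2 ≤ m₂) :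
    spinNorm (mu m₁ m₂) = lambdaNorm (mu m₁ m₂) :=
  spinNorm_eq_of_spinSq_eq (lambdaNorm_mu_of_add_two_le h)
    (spinSq_of_add_two_le m₁.cast_nonneg (by exact_mod_cast h))

lemma spinNorm_eq_lambdaNorm_of_le_of_le {m₁ m₂ : ℕ} (h₀ : 1 ≤ m₂) (h₁ : m₂ + 2 ≤ m₁)
    (h₂ : m₁ ≤ 3 * m₂ + 2) : spinNorm (mu m₁ m₂) = lambdaNorm (mu m₁ m₂) :=
  spinNorm_eq_of_spinSq_eq (lambdaNorm_mu_of_le_of_le h₁ h₂)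
    (spinSq_of_le_of_le (by exact_mod_cast h₀) (by exact_mod_cast h₁) (by exact_mod_cast h₂))

lemma spinNorm_eq_lambdaNorm_of_three_mul_add_six_le {m₁ m₂ : ℕ} (h : 3 * m₂ + 6 ≤ m₁) :
    spinNorm (mu m₁ m₂) = lambdaNorm (mu m₁ m₂) :=
  spinNorm_eq_of_spinSq_eq (lambdaNorm_mu_of_three_mul_add_six_le h)
    (spinSq_of_three_mul_add_six_le m₂.cast_nonneg (by exact_mod_cast h))

lemma lambdaNorm_lt_spinNorm_self (m : ℕ) : lambdaNorm (mu m m) < spinNorm (mu m m) := by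
  obtain rfl | hm := Nat.eq_zero_or_pos m
  · exact lambdaNorm_lt_spinNorm_of_lt_spinSq le_rfl (by rw [lambdaNorm_mu_zero]; simp)
      (spinSq_pos _ _)
  · exact lambdaNorm_lt_spinNorm_of_lt_spinSq (by positivity) (lambdaNorm_mu_self hm)
      (lt_spinSq_self (by exact_mod_cast hm))

lemma lambdaNorm_lt_spinNorm_two_zero : lambdaNorm (mu 2 0) < spinNorm (mu 2 0) :=
  lambdaNorm_lt_spinNorm_of_lt_spinSq le_rfl
    ((lambdaNorm_mu_of_le_of_le le_rfl le_rfl).trans (by norm_num)) (spinSq_pos _ _)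

lemma lambdaNorm_lt_spinNorm_of_eq_three_mul_add_four {m₁ m₂ : ℕ} (h : m₁ = 3 * m₂ + 4) :
    lambdaNorm (mu m₁ m₂) < spinNorm (mu m₁ m₂) := by
  have hlt := lt_spinSq_three_mul_add_four m₂.cast_nonneg
  rw [← (by exact_mod_cast h : (m₁ : ℝ) = 3 * m₂ + 4)] at hlt
  exact lambdaNorm_lt_spinNorm_of_lt_spinSq (by positivity)
    (lambdaNorm_mu_of_eq_three_mul_add_four h) hlt

lemma forms_iff_of_even {m₁ m₂ : ℕ} (hm : Even (m₁ + m₂)) :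
    ((∃ a b : ℕ, 1 ≤ a + b ∧ m₁ = a + 3*b + 2 ∧ m₂ = a + b) ∨
     (∃ a b : ℕ, 1 ≤ b ∧ m₁ = 2*a + 3*b + 3 ∧ m₂ + 1 = b) ∨
     (∃ a b : ℕ, 1 ≤ a ∧ m₁ + 1 = a ∧ m₂ = a + 2*b + 1)) ↔
      (1 ≤ m₂ ∧ m₂ + 2 ≤ m₁ ∧ m₁ ≤ 3 * m₂ + 2) ∨ 3 * m₂ + 6 ≤ m₁ ∨ m₁ + 2 ≤ m₂ := by
  obtain ⟨k, hk⟩ := hm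
  constructor
  · rintro (⟨a, b, h₁, h₂, h₃⟩ | ⟨a, b, h₁, h₂, h₃⟩ | ⟨a, b, h₁, h₂, h₃⟩) <;> omega
  · rintro (⟨h₀, h₁, h₂⟩ | h | h)
    · exact Or.inl ⟨m₂ - (m₁ - m₂ - 2) / 2, (m₁ - m₂ - 2) / 2, by omega, by omega, by omega⟩
    · exact Or.inr <| Or.inl ⟨(m₁ - 3 * m₂ - 6) / 2, m₂ + 1, by omega, by omega, by omega⟩
    · exact Or.inr <| Or.inr ⟨m₁ + 1, (m₂ - m₁ - 2) / 2, by omega, by omega, by omega⟩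

/-- For a K-type `μ = m₁ϖ₁ + m₂ϖ₂` of G₂₍₂₎ (so `m₁+m₂` even),
`‖μ‖_spin = ‖μ‖_lambda` iff `(m₁,m₂)` has one of the three listed forms. -/
theorem spin_eq_lambda_iff_G2 (m₁ m₂ : ℕ) (hm : Even (m₁ + m₂)) :
    spinNorm (mu m₁ m₂) = lambdaNorm (mu m₁ m₂) ↔
    ((∃ a b : ℕ, 1 ≤ a + b ∧ m₁ = a + 3*b + 2 ∧ m₂ = a + b) ∨
     (∃ a b : ℕ, 1 ≤ b ∧ m₁ = 2*a + 3*b + 3 ∧ m₂ + 1 = b) ∨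
     (∃ a b : ℕ, 1 ≤ a ∧ m₁ + 1 = a ∧ m₂ = a + 2*b + 1)) := by
  rw [forms_iff_of_even hm]
  obtain ⟨k, hk⟩ := hm
  rcases (by omega : m₁ + 2 ≤ m₂ ∨ m₁ = m₂ ∨ (m₁ = 2 ∧ m₂ = 0) ∨
      (1 ≤ m₂ ∧ m₂ + 2 ≤ m₁ ∧ m₁ ≤ 3 * m₂ + 2) ∨ m₁ = 3 * m₂ + 4 ∨ 3 * m₂ + 6 ≤ m₁)
    with h | rfl | ⟨rfl, rfl⟩ | ⟨h₀, h₁, h₂⟩ | h | h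
  · exact iff_of_true (spinNorm_eq_lambdaNorm_of_add_two_le h) (by omega)
  · exact iff_of_false (lambdaNorm_lt_spinNorm_self m₁).ne' (by omega)
  · exact iff_of_false lambdaNorm_lt_spinNorm_two_zero.ne' (by omega)
  · exact iff_of_true (spinNorm_eq_lambdaNorm_of_le_of_le h₀ h₁ h₂) (by omega)
  · exact iff_of_false (lambdaNorm_lt_spinNorm_of_eq_three_mul_add_four h).ne' (by omega)
  · exact iff_of_true (spinNorm_eq_lambdaNorm_of_three_mul_add_six_le h) (by omega)

end Stmt2
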